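/- Let α ∈ (0,1), β = 1/8, u_p = 0.5(1-(1-α)^{1/p}) and let U_n ~ χ²(n-2). Suppose p = p(n) → ∞ with p(n) = O(n^{2-δ}) for some δ ∈ (0,2). Then p · P(U_n < n(1 - u_p^β)) → 0 as n → ∞. -/

import Mathlib

/-!
With `L = -log (1 - α) > 0` we have `(1 - α) ^ (1 / p) = exp (-L / p) ≤ p / (p + L)`, so the level
`u_p` is at least of order `1 / p`. Hence, when `p ≤ C n ^ 2`, the relative deviation
`ε = u_p ^ (1 / 8)` satisfies `n ε ^ 2 ≳ √n`. Exponentially tilting the Gamma density (the Chernoff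
bound) gives `P(U_n < n (1 - ε)) ≤ exp (1 - n ε ^ 2 / 8)`, and `C n ^ 2 exp (-c √n) → 0`.
-/

open MeasureTheory ProbabilityTheory Filter Real

/-- Standard normal CDF. -/
noncomputable def Phi : ℝ → ℝ := fun x => ProbabilityTheory.cdf (gaussianReal 0 1) x

/-- Standard normal quantile function. -/
noncomputable def PhiInv : ℝ → ℝ := fun q => sInf {x | q ≤ Phi x}


/-- Chi-square distribution with k degrees of freedom, as Gamma(k/2, rate 1/2). -/
noncomputable def chiSquare (k : ℝ) : Measure ℝ := gammaMeasure (k/2) (1/2)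

open Set

lemma gammaPDF_le_tilt {a r s t x : ℝ} (ha : 0 < a) (hr : 0 < r) (hs : 0 ≤ s) (hx : x < t) :
    gammaPDF a r x ≤ ENNReal.ofReal (exp (s * t) * (r / (r + s)) ^ a) * gammaPDF a (r + s) x := by
  rcases lt_or_ge x 0 with hx0 | hx0
  · simp [gammaPDF_of_neg hx0]
  have hrs : 0 < r + s := by linarith
  rw [gammaPDF_of_nonneg hx0, gammaPDF_of_nonneg hx0, ← ENNReal.ofReal_mul (by positivity)]
  refine ENNReal.ofReal_le_ofReal ?_
  have htilt : exp (-(r * x)) ≤ exp (s * t) * exp (-((r + s) * x)) := by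
    rw [← exp_add]
    exact exp_le_exp.mpr (by nlinarith)
  calc r ^ a / Gamma a * x ^ (a - 1) * exp (-(r * x))
      ≤ r ^ a / Gamma a * x ^ (a - 1) * (exp (s * t) * exp (-((r + s) * x))) := by
        have := Gamma_pos_of_pos ha
        gcongr
    _ = exp (s * t) * (r / (r + s)) ^ a *
          ((r + s) ^ a / Gamma a * x ^ (a - 1) * exp (-((r + s) * x))) := by
      rw [div_rpow hr.le hrs.le]
      field_simp

lemma gammaMeasure_Iio_le {a r s : ℝ} (ha : 0 < a) (hr : 0 < r) (hs : 0 ≤ s) (t : ℝ) :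
    gammaMeasure a r (Iio t) ≤ ENNReal.ofReal (exp (s * t) * (r / (r + s)) ^ a) := by
  set K := ENNReal.ofReal (exp (s * t) * (r / (r + s)) ^ a)
  calc gammaMeasure a r (Iio t) = ∫⁻ x in Iio t, gammaPDF a r x :=
        withDensity_apply _ measurableSet_Iio
    _ ≤ ∫⁻ x in Iio t, K * gammaPDF a (r + s) x :=
        setLIntegral_mono' measurableSet_Iio fun x hx => gammaPDF_le_tilt ha hr hs hx
    _ ≤ ∫⁻ x, K * gammaPDF a (r + s) x := setLIntegral_le_lintegral _ _
    _ = K := by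
        rw [lintegral_const_mul' _ _ ENNReal.ofReal_ne_top,
          lintegral_gammaPDF_eq_one ha (by linarith), mul_one]

lemma chiSquare_lt_mul_one_sub_le {n ε : ℝ} (hn : 2 < n) (hε : 0 ≤ ε) :
    (chiSquare (n - 2) {x | x < n * (1 - ε)}).toReal ≤ exp (1 - n * ε ^ 2 / 8) := by
  refine ENNReal.toReal_le_of_le_ofReal (exp_pos _).le ?_
  refine (gammaMeasure_Iio_le (by linarith) one_half_pos (by positivity : 0 ≤ ε / 4) _).trans
    (ENNReal.ofReal_le_ofReal ?_)
  have h1ε : 0 < 1 + ε / 2 := by linarith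
  have hbase : (1 / 2 : ℝ) / (1 / 2 + ε / 4) = (1 + ε / 2)⁻¹ := by field_simp; ring
  have hlog : ε / 2 - (ε / 2) ^ 2 ≤ log (1 + ε / 2) := by
    have := one_sub_inv_le_log_of_pos h1ε
    have hinv : (1 + ε / 2)⁻¹ * (1 + ε / 2) = 1 := inv_mul_cancel₀ h1ε.ne'
    nlinarith [pow_nonneg hε 3]
  rw [hbase, inv_rpow h1ε.le, rpow_def_of_pos h1ε, ← exp_neg, ← exp_add]
  refine exp_le_exp.mpr ?_
  nlinarith [mul_le_mul_of_nonneg_left hlog (by linarith : 0 ≤ (n - 2) / 2)]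

-- The paper's `u_p`.
noncomputable def sidakLevel (α p : ℝ) : ℝ := 0.5 * (1 - (1 - α) ^ ((1 : ℝ) / p))

lemma neg_log_div_le_one_sub_rpow {q p : ℝ} (hq0 : 0 < q) (hq1 : q ≤ 1) (hp : 1 ≤ p) :
    -log q / ((1 - log q) * p) ≤ 1 - q ^ (1 / p) := by
  set L := -log q
  have hL : 0 ≤ L := neg_nonneg.mpr (log_nonpos hq0.le hq1)
  have hp0 : 0 < p := by linarith
  have hexp : q ^ (1 / p) ≤ (1 + L / p)⁻¹ := by
    rw [rpow_def_of_pos hq0, show log q * (1 / p) = -(L / p) by ring, exp_neg]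
    exact inv_anti₀ (by positivity) (by linarith [add_one_le_exp (L / p)])
  have hinv : 1 - (1 + L / p)⁻¹ = L / (p + L) := by field_simp; ring
  calc L / ((1 - log q) * p) = L / ((1 + L) * p) := by ring
    _ ≤ L / (p + L) := div_le_div_of_nonneg_left hL (by positivity) (by nlinarith)
    _ ≤ 1 - q ^ (1 / p) := by linarith

lemma div_le_sidakLevel {α p : ℝ} (hα0 : 0 ≤ α) (hα1 : α < 1) (hp : 1 ≤ p) :
    -log (1 - α) / (2 * (1 - log (1 - α))) / p ≤ sidakLevel α p := by
  have := neg_log_div_le_one_sub_rpow (by linarith : 0 < 1 - α) (by linarith) hp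
  calc -log (1 - α) / (2 * (1 - log (1 - α))) / p
      = -log (1 - α) / ((1 - log (1 - α)) * p) / 2 := by rw [div_div, div_div]; ring_nf
    _ ≤ sidakLevel α p := by rw [sidakLevel]; linarith

lemma mul_sq_rpow_eighth_ge {c u n : ℝ} (hc : 0 < c) (hn : 0 < n) (hu : c / n ^ 2 ≤ u) :
    c ^ (4⁻¹ : ℝ) * √n ≤ n * (u ^ (8⁻¹ : ℝ)) ^ 2 := by
  have hu0 : 0 ≤ u := le_trans (by positivity) hu
  have hsq : (u ^ (8⁻¹ : ℝ)) ^ 2 = u ^ (4⁻¹ : ℝ) := by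
    rw [← rpow_natCast, ← rpow_mul hu0]; norm_num
  have hroot : (c / n ^ 2) ^ (4⁻¹ : ℝ) = c ^ (4⁻¹ : ℝ) / √n := by
    rw [div_rpow hc.le (by positivity), sqrt_eq_rpow, ← rpow_natCast, ← rpow_mul hn.le]
    norm_num
  have hsqrt : 0 < √n := sqrt_pos.mpr hn
  calc c ^ (4⁻¹ : ℝ) * √n = n * (c ^ (4⁻¹ : ℝ) / √n) := by
        field_simp; rw [sq_sqrt hn.le]
    _ ≤ n * (u ^ (8⁻¹ : ℝ)) ^ 2 := by
        rw [hsq, ← hroot]; gcongr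

lemma tendsto_sq_mul_exp_neg_mul_sqrt {b : ℝ} (hb : 0 < b) :
    Tendsto (fun x : ℝ => x ^ 2 * exp (-(b * √x))) atTop (nhds 0) := by
  have h := ((tendsto_pow_mul_exp_neg_atTop_nhds_zero 4).comp
    (tendsto_sqrt_atTop.const_mul_atTop hb)).const_mul (b ^ 4)⁻¹
  rw [mul_zero] at h
  refine h.congr' ((eventually_ge_atTop 0).mono fun x hx => ?_)
  have hx4 : √x ^ 4 = x ^ 2 := by rw [show 4 = 2 * 2 by rfl, pow_mul, sq_sqrt hx]
  simp only [Function.comp_apply, mul_pow, hx4]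
  field_simp

theorem tendsto_mul_chiSquare_lt_sidakLevel {α C : ℝ} (hα0 : 0 < α) (hα1 : α < 1) (hC : 0 < C)
    (p : ℕ → ℕ) (hp : ∀ᶠ n : ℕ in atTop, (p n : ℝ) ≤ C * (n : ℝ) ^ 2) :
    Tendsto (fun n : ℕ => (p n : ℝ) *
        (chiSquare ((n : ℝ) - 2) {x | x < n * (1 - sidakLevel α (p n) ^ (8⁻¹ : ℝ))}).toReal)
      atTop (nhds 0) := by
  set c := -log (1 - α) / (2 * (1 - log (1 - α)))
  have hlog : log (1 - α) < 0 := log_neg (by linarith) (by linarith)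
  have hc : 0 < c := div_pos (by linarith) (by linarith)
  set K := (c / C) ^ (4⁻¹ : ℝ)
  have hK : 0 < K := by positivity
  have hlim : Tendsto (fun n : ℕ => C * exp 1 * ((n : ℝ) ^ 2 * exp (-(K / 8 * √n))))
      atTop (nhds 0) := by
    simpa only [Function.comp_def, mul_zero] using
      ((tendsto_sq_mul_exp_neg_mul_sqrt (by positivity : 0 < K / 8)).comp
        tendsto_natCast_atTop_atTop).const_mul (C * exp 1)
  refine squeeze_zero'
    (.of_forall fun n => mul_nonneg (p n).cast_nonneg ENNReal.toReal_nonneg) ?_ hlim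
  filter_upwards [hp, eventually_gt_atTop 2] with n hpn hn
  obtain hp0 | hp1 := Nat.eq_zero_or_pos (p n)
  · rw [hp0, Nat.cast_zero, zero_mul]; positivity
  have hn' : (2 : ℝ) < n := by exact_mod_cast hn
  have hP : (1 : ℝ) ≤ p n := by exact_mod_cast hp1
  have hu : c / C / (n : ℝ) ^ 2 ≤ sidakLevel α (p n) := by
    calc c / C / (n : ℝ) ^ 2 = c / (C * (n : ℝ) ^ 2) := by rw [div_div]
      _ ≤ c / p n := div_le_div_of_nonneg_left hc.le (by linarith) hpn
      _ ≤ sidakLevel α (p n) := div_le_sidakLevel hα0.le hα1 hP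
  have hε : 0 ≤ sidakLevel α (p n) ^ (8⁻¹ : ℝ) := rpow_nonneg (le_trans (by positivity) hu) _
  have hexponent : K * √n ≤ n * (sidakLevel α (p n) ^ (8⁻¹ : ℝ)) ^ 2 :=
    mul_sq_rpow_eighth_ge (by positivity) (by linarith) hu
  calc (p n : ℝ) *
        (chiSquare ((n : ℝ) - 2) {x | x < n * (1 - sidakLevel α (p n) ^ (8⁻¹ : ℝ))}).toReal
      ≤ C * (n : ℝ) ^ 2 * exp (1 - n * (sidakLevel α (p n) ^ (8⁻¹ : ℝ)) ^ 2 / 8) :=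
        mul_le_mul hpn (chiSquare_lt_mul_one_sub_le hn' hε) ENNReal.toReal_nonneg (by positivity)
    _ ≤ C * (n : ℝ) ^ 2 * exp (1 - K / 8 * √n) := by gcongr; linarith
    _ = C * exp 1 * ((n : ℝ) ^ 2 * exp (-(K / 8 * √n))) := by rw [sub_eq_add_neg, exp_add]; ring

theorem stmt7_general (α δ C : ℝ) (hα0 : 0 < α) (hα1 : α < 1) (hδ0 : 0 < δ) (hC : 0 < C)
    (p : ℕ → ℕ)
    (hpC : ∀ n : ℕ, (p n : ℝ) ≤ C * (n : ℝ) ^ (2 - δ)) :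
    Tendsto (fun n : ℕ =>
        (p n : ℝ) *
          ((chiSquare ((n : ℝ) - 2))
            {x | x < (n : ℝ) * (1 - (0.5 * (1 - (1 - α) ^ ((1 : ℝ) / (p n : ℝ)))) ^ (8⁻¹ : ℝ))}).toReal)
      atTop (nhds 0) := by
  refine tendsto_mul_chiSquare_lt_sidakLevel hα0 hα1 hC p ?_
  filter_upwards [eventually_ge_atTop 1] with n hn
  calc (p n : ℝ) ≤ C * (n : ℝ) ^ (2 - δ) := hpC n
    _ ≤ C * (n : ℝ) ^ (2 : ℝ) := by
      gcongr
      · exact_mod_cast hn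
      · linarith
    _ = C * (n : ℝ) ^ 2 := by rw [rpow_two]

theorem stmt7 (α δ C : ℝ) (hα0 : 0 < α) (hα1 : α < 1) (hδ0 : 0 < δ) (hδ2 : δ < 2) (hC : 0 < C)
    (p : ℕ → ℕ) (hptop : Tendsto p atTop atTop)
    (hpC : ∀ n : ℕ, (p n : ℝ) ≤ C * (n : ℝ) ^ (2 - δ)) :
    Tendsto (fun n : ℕ =>
        (p n : ℝ) *
          ((chiSquare ((n : ℝ) - 2))
            {x | x < (n : ℝ) * (1 - (0.5 * (1 - (1 - α) ^ ((1 : ℝ) / (p n : ℝ)))) ^ (8⁻¹ : ℝ))}).toReal)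
      atTop (nhds 0) :=
  stmt7_general α δ C hα0 hα1 hδ0 hC p hpC
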